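/- Let 𝒯_n denote the set of plane binary trees with n internal nodes. For T ∈ 𝒯_n, let E(T) be the set of linear extensions of T (bijective labelings of the internal nodes by {1,…,n} in which each internal node's label is smaller than the labels of its internal-node children), and for e ∈ E(T) let w_e be the word reading the labels of the internal nodes from left to right (in-order). Then for every n ≥ 0: ∑_{T ∈ 𝒯_n} ∑_{e ∈ E(T)} q^{inv(w_e)} = [n]_q!, as an identity of polynomials in ℕ[q], where [n]_q! = [n]_q [n-1]_q ⋯ [1]_q and [k]_q = 1 + q + ⋯ + q^{k-1}. -/

import Mathlib

open Polynomial
open scoped Classical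

/-- A plane binary tree: either the empty tree `∅` (a single leaf attached to the root,
no internal nodes), or the graft `T₁ ∨ T₂` of two plane binary trees (joined at a new
internal node attached to a new root). -/
inductive PBT : Type
  | empty : PBT
  | graft : PBT → PBT → PBT
deriving DecidableEq

/-- The number of internal nodes of a plane binary tree. -/
def PBT.size : PBT → ℕ
  | empty => 0
  | graft l r => size l + size r + 1

/-- A plane binary tree whose internal nodes carry natural-number labels. -/
inductive LPBT : Type
  | empty : LPBT
  | graft : LPBT → ℕ → LPBT → LPBT
deriving DecidableEq

namespace LPBT

/-- The underlying (unlabeled) plane binary tree of a labeled tree. -/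
def shape : LPBT → PBT
  | empty => PBT.empty
  | graft l _ r => PBT.graft (shape l) (shape r)

/-- The word reading the labels of the internal nodes from left to right (in-order). -/
def inorder : LPBT → List ℕ
  | empty => []
  | graft l a r => inorder l ++ a :: inorder r

/-- The label of the root internal node, if any. -/
def rootLabel? : LPBT → Option ℕ
  | empty => none
  | graft _ a _ => some a

/-- The increasing (linear-extension) condition: every internal node's label is smaller
than the labels of its internal-node children. -/
def IsIncreasing : LPBT → Prop
  | empty => True
  | graft l a r =>
      (∀ b ∈ rootLabel? l, a < b) ∧ (∀ b ∈ rootLabel? r, a < b) ∧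
        IsIncreasing l ∧ IsIncreasing r

end LPBT

/-- The set of linear extensions of a plane binary tree `T` with `n` internal nodes,
encoded as labeled trees of shape `T` whose labels are a bijective labeling by
`{1, …, n}` (the in-order word is a rearrangement of `[1, …, n]`) satisfying the
increasing condition.  The in-order word of such a labeled tree is the word `w_e`. -/
def linExts (T : PBT) : Set LPBT :=
  {L : LPBT | L.shape = T ∧ L.inorder.Perm (List.range' 1 T.size) ∧ L.IsIncreasing}

/-- The number of inversions of a word `w`: the number of pairs of positions `i < j`
with `w_i > w_j`. -/
def invCount (w : List ℕ) : ℕ :=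
  (Finset.univ.filter fun p : Fin w.length × Fin w.length =>
    p.1 < p.2 ∧ w.get p.2 < w.get p.1).card

/-- The `q`-integer `[k]_q = 1 + q + ⋯ + q^{k-1}` in `ℕ[q]` (with `q = X`). -/
noncomputable def qInt (k : ℕ) : Polynomial ℕ :=
  ∑ j ∈ Finset.range k, X ^ j

/-- The `q`-factorial `[n]_q! = [n]_q [n-1]_q ⋯ [1]_q` in `ℕ[q]`. -/
noncomputable def qFact (n : ℕ) : Polynomial ℕ :=
  ∏ k ∈ Finset.range n, qInt (k + 1)

/-!
Reading an increasing binary tree in order is a bijection onto words with distinct letters: the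
inverse splits a word at its smallest letter, which becomes the root. Summed over all shapes, the
left-hand side is therefore the inversion generating function of the permutations of
`{1, …, n}`. Inserting the letter `n + 1` into a permutation of `{1, …, n}` with `k` letters to
its right creates exactly `k` new inversions, so this generating function is multiplied by
`[n + 1]_q` at each step (MacMahon).
-/

theorem invCount_eq_sum (w : List ℕ) :
    invCount w = ∑ i : Fin w.length, ∑ j : Fin w.length,
      if i < j ∧ w.get j < w.get i then 1 else 0 := by
  rw [invCount, Finset.card_filter, Fintype.sum_prod_type]

theorem invCount_cons (a : ℕ) (w : List ℕ) :
    invCount (a :: w) = w.countP (· < a) + invCount w := by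
  rw [invCount_eq_sum, invCount_eq_sum]
  change ∑ i : Fin (w.length + 1), ∑ j : Fin (w.length + 1), _ = _
  simp only [Fin.sum_univ_succ, Fin.succ_pos, Fin.succ_lt_succ_iff, Fin.not_lt_zero, false_and,
    if_false, true_and, List.get_eq_getElem, Fin.val_succ, Fin.val_zero, List.getElem_cons_succ,
    List.getElem_cons_zero, zero_add, Fin.sum_univ_fun_getElem w fun b => if b < a then 1 else 0]
  simp [List.sum_map_ite, List.countP_eq_length_filter]

theorem invCount_insertIdx_of_forall_lt {m : ℕ} {w : List ℕ} (hw : ∀ b ∈ w, b < m) {i : ℕ}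
    (hi : i ≤ w.length) : invCount (w.insertIdx i m) = invCount w + (w.length - i) := by
  induction w generalizing i with
  | nil => simp_all [invCount_cons]
  | cons a w ih =>
    cases i with
    | zero =>
      rw [List.insertIdx_zero, invCount_cons, List.countP_eq_length.mpr (by simpa using hw)]
      simp only [List.length_cons]
      omega
    | succ i =>
      have hw' : ∀ b ∈ w, b < m := fun b hb => hw b (List.mem_cons_of_mem a hb)
      have hma : ¬ m < a := (hw a List.mem_cons_self).not_gt
      rw [List.insertIdx_succ_cons, invCount_cons, invCount_cons,
        ((List.perm_insertIdx m w (Nat.le_of_succ_le_succ hi)).countP_eq _), List.countP_cons,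
        ih hw' (Nat.le_of_succ_le_succ hi)]
      simp only [hma, decide_false, Bool.false_eq_true, if_false, List.length_cons]
      omega

theorem List.permutations'Aux_eq_map_insertIdx {α : Type*} (x : α) (s : List α) :
    s.permutations'Aux x = (List.range (s.length + 1)).map (s.insertIdx · x) :=
  List.ext_getElem (by simp [List.length_permutations'Aux])
    fun n _ _ => by simp [List.getElem_permutations'Aux]

theorem sum_permutations'Aux_X_pow_invCount {m : ℕ} {w : List ℕ} (hw : ∀ b ∈ w, b < m) :
    ((w.permutations'Aux m).map fun t => (X : ℕ[X]) ^ invCount t).sum =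
      X ^ invCount w * qInt (w.length + 1) := by
  rw [List.permutations'Aux_eq_map_insertIdx, List.map_map,
    ← List.sum_toFinset _ List.nodup_range, List.toFinset_range, qInt, Finset.mul_sum,
    ← Finset.sum_range_reflect]
  refine Finset.sum_congr rfl fun i hi => ?_
  rw [Finset.mem_range] at hi
  rw [Function.comp_apply, invCount_insertIdx_of_forall_lt hw (by omega), pow_add]
  congr 2
  omega

theorem sum_permutations'_cons_X_pow_invCount {m : ℕ} {l : List ℕ} (hl : ∀ b ∈ l, b < m) :
    ((m :: l).permutations'.map fun w => (X : ℕ[X]) ^ invCount w).sum =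
      (l.permutations'.map fun w => (X : ℕ[X]) ^ invCount w).sum * qInt (l.length + 1) := by
  rw [List.permutations', List.flatMap_def, List.map_flatten, List.sum_flatten, List.map_map,
    List.map_map, ← List.sum_map_mul_right]
  refine congrArg List.sum (List.map_congr_left fun w hw => ?_)
  have hperm : w.Perm l := List.mem_permutations'.mp hw
  rw [Function.comp_apply, Function.comp_apply,
    sum_permutations'Aux_X_pow_invCount fun b hb => hl b (hperm.subset hb), hperm.length_eq]

theorem List.setOf_perm_eq_coe_toFinset {α : Type*} [DecidableEq α] (l : List α) :
    {w : List α | w.Perm l} = ↑l.permutations'.toFinset := by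
  ext w
  simp [List.mem_permutations']

-- `permutations'` inserts the head of a list into the permutations of its tail, so the largest
-- letter has to come first.
theorem sum_permutations'_reverse_range'_X_pow_invCount (n : ℕ) :
    (((List.range' 1 n).reverse.permutations').map fun w => (X : ℕ[X]) ^ invCount w).sum =
      qFact n := by
  induction n with
  | zero => simp [qFact, invCount]
  | succ n ih =>
    rw [List.range'_concat, List.reverse_append, List.reverse_singleton, List.singleton_append,
      sum_permutations'_cons_X_pow_invCount (by simp), ih, List.length_reverse,
      List.length_range', qFact, qFact, Finset.prod_range_succ]

theorem finsum_mem_setOf_perm_range'_X_pow_invCount (n : ℕ) :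
    ∑ᶠ w ∈ {w : List ℕ | w.Perm (List.range' 1 n)}, (X : ℕ[X]) ^ invCount w = qFact n := by
  have hnodup : (List.range' 1 n).reverse.permutations'.Nodup :=
    (List.permutations_perm_permutations' _).nodup_iff.mp
      (List.nodup_permutations _ (List.nodup_reverse.mpr List.nodup_range'))
  simp_rw [← List.perm_reverse (l₂ := List.range' 1 n)]
  rw [List.setOf_perm_eq_coe_toFinset, finsum_mem_coe_finset, List.sum_toFinset _ hnodup,
    sum_permutations'_reverse_range'_X_pow_invCount]

theorem PBT.finite_setOf_size_le (n : ℕ) : {T : PBT | T.size ≤ n}.Finite := by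
  induction n with
  | zero =>
    refine (Set.finite_singleton PBT.empty).subset fun T hT => ?_
    cases T with
    | empty => rfl
    | graft l r => simp [PBT.size] at hT
  | succ n ih =>
    refine ((ih.image2 PBT.graft ih).insert PBT.empty).subset fun T hT => ?_
    cases T with
    | empty => exact Set.mem_insert _ _
    | graft l r =>
      simp only [Set.mem_ofPred_eq, PBT.size] at hT
      exact Set.mem_insert_of_mem _ ⟨l, (by omega : l.size ≤ n), r, (by omega : r.size ≤ n), rfl⟩

namespace LPBT

theorem length_inorder (L : LPBT) : L.inorder.length = L.shape.size := by
  induction L with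
  | empty => rfl
  | graft l a r ihl ihr =>
    simp only [inorder, shape, PBT.size, List.length_append, List.length_cons, ihl, ihr]
    omega

theorem mem_inorder_of_mem_rootLabel? {L : LPBT} {a : ℕ} (h : a ∈ L.rootLabel?) :
    a ∈ L.inorder := by
  cases L with
  | empty => cases h
  | graft l b r =>
    cases h
    exact List.mem_append_right _ List.mem_cons_self

theorem IsIncreasing.lt_of_mem_inorder {L : LPBT} (hL : L.IsIncreasing) {c : ℕ}
    (hc : ∀ a ∈ L.rootLabel?, c < a) {b : ℕ} (hb : b ∈ L.inorder) : c < b := by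
  induction L generalizing c b with
  | empty => cases hb
  | graft l a r ihl ihr =>
    obtain ⟨hla, hra, hl, hr⟩ := hL
    have hca : c < a := hc a rfl
    simp only [inorder, List.mem_append, List.mem_cons] at hb
    rcases hb with hb | rfl | hb
    · exact hca.trans (ihl hl hla hb)
    · exact hca
    · exact hca.trans (ihr hr hra hb)

theorem IsIncreasing.root_le {l r : LPBT} {a : ℕ} (h : (graft l a r).IsIncreasing) {b : ℕ}
    (hb : b ∈ (graft l a r).inorder) : a ≤ b := by
  simp only [inorder, List.mem_append, List.mem_cons] at hb
  rcases hb with hb | rfl | hb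
  · exact (h.2.2.1.lt_of_mem_inorder h.1 hb).le
  · exact le_rfl
  · exact (h.2.2.2.lt_of_mem_inorder h.2.1 hb).le

theorem eq_of_inorder_eq {L₁ L₂ : LPBT} (h₁ : L₁.IsIncreasing) (h₂ : L₂.IsIncreasing)
    (hnodup : L₁.inorder.Nodup) (h : L₁.inorder = L₂.inorder) : L₁ = L₂ := by
  induction L₁ generalizing L₂ with
  | empty => cases L₂ <;> simp_all [inorder]
  | graft l a r ihl ihr =>
    cases L₂ with
    | empty => simp [inorder] at h
    | graft l' a' r' =>
      have ha : a = a' := le_antisymm (h₁.root_le (h ▸ by simp [inorder]))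
        (h₂.root_le (h ▸ by simp [inorder]))
      subst ha
      simp only [inorder] at h hnodup
      have ha_notMem : a ∉ l.inorder ++ r.inorder :=
        (List.nodup_cons.mp (List.nodup_middle.mp hnodup)).1
      obtain ⟨hl, -, hr⟩ := (List.append_cons_inj_of_notMem (fun h => ha_notMem
        (List.mem_append_left _ h)) fun h => ha_notMem (List.mem_append_right _ h)).mp h
      rw [ihl h₁.2.2.1 h₂.2.2.1 hnodup.of_append_left hl,
        ihr h₁.2.2.2 h₂.2.2.2 hnodup.of_append_right.of_cons hr]

theorem exists_isIncreasing_inorder_eq {w : List ℕ} (hw : w.Nodup) :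
    ∃ L : LPBT, L.IsIncreasing ∧ L.inorder = w := by
  induction hn : w.length using Nat.strong_induction_on generalizing w with
  | _ n ih =>
  by_cases hne : w = []
  · exact ⟨empty, trivial, hne ▸ rfl⟩
  have hmin : ∀ b ∈ w, w.min hne ≤ b := fun b hb => List.min_le_of_mem hb
  obtain ⟨u, v, huv⟩ := List.append_of_mem (List.min_mem hne)
  generalize w.min hne = m at hmin huv
  subst huv
  have hm : m ∉ u ++ v := (List.nodup_cons.mp (List.nodup_middle.mp hw)).1
  have hlt : ∀ b ∈ u ++ v, m < b := fun b hb =>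
    lt_of_le_of_ne (hmin b (List.perm_middle.symm.subset (List.mem_cons_of_mem m hb)))
      fun h => hm (h ▸ hb)
  have hlen : u.length + v.length < n := by
    simp only [← hn, List.length_append, List.length_cons]
    omega
  obtain ⟨Lu, hLu, rfl⟩ := ih _ (by omega) hw.of_append_left rfl
  obtain ⟨Lv, hLv, rfl⟩ := ih _ (by omega) hw.of_append_right.of_cons rfl
  refine ⟨graft Lu m Lv, ⟨fun b hb => ?_, fun b hb => ?_, hLu, hLv⟩, rfl⟩
  · exact hlt b (List.mem_append_left _ (mem_inorder_of_mem_rootLabel? hb))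
  · exact hlt b (List.mem_append_right _ (mem_inorder_of_mem_rootLabel? hb))

theorem bijOn_inorder {R : List ℕ} (hR : R.Nodup) :
    Set.BijOn inorder {L | L.inorder.Perm R ∧ L.IsIncreasing} {w | w.Perm R} := by
  refine ⟨fun L hL => hL.1,
    fun L₁ h₁ L₂ h₂ h => eq_of_inorder_eq h₁.2 h₂.2 (h₁.1.nodup_iff.mpr hR) h, fun w hw => ?_⟩
  obtain ⟨L, hL, rfl⟩ := exists_isIncreasing_inorder_eq (hw.nodup_iff.mpr hR)
  exact ⟨L, ⟨hw, hL⟩, rfl⟩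

end LPBT

theorem finite_linExts (T : PBT) : (linExts T).Finite := by
  have hbij := LPBT.bijOn_inorder (List.nodup_range' (s := 1) (n := T.size))
  refine Set.Finite.subset (Set.Finite.of_finite_image ?_ hbij.injOn) fun L hL => ⟨hL.2.1, hL.2.2⟩
  rw [hbij.image_eq, List.setOf_perm_eq_coe_toFinset]
  exact Finset.finite_toSet _

theorem pairwiseDisjoint_linExts (s : Set PBT) : s.PairwiseDisjoint linExts :=
  fun _ _ _ _ hne => Set.disjoint_left.mpr fun _ h₁ h₂ => hne (h₁.1.symm.trans h₂.1)

theorem biUnion_linExts_size_eq (n : ℕ) :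
    ⋃ T ∈ {T : PBT | T.size = n}, linExts T =
      {L | L.inorder.Perm (List.range' 1 n) ∧ L.IsIncreasing} := by
  ext L
  simp only [Set.mem_iUnion, Set.mem_ofPred_eq, linExts, exists_prop]
  constructor
  · rintro ⟨T, rfl, rfl, hperm, hinc⟩
    exact ⟨hperm, hinc⟩
  · rintro ⟨hperm, hinc⟩
    have hsize : L.shape.size = n := by
      rw [← LPBT.length_inorder, hperm.length_eq, List.length_range']
    exact ⟨L.shape, hsize, rfl, hsize ▸ hperm, hinc⟩

/-- For every `n ≥ 0`,
`∑_{T ∈ 𝒯_n} ∑_{e ∈ E(T)} q^{inv(w_e)} = [n]_q!` as polynomials in `ℕ[q]`. -/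
theorem stmt_13 (n : ℕ) :
    (∑ᶠ T ∈ {T : PBT | T.size = n},
      ∑ᶠ L ∈ linExts T, (X : Polynomial ℕ) ^ invCount L.inorder) = qFact n := by
  rw [← finsum_mem_biUnion (pairwiseDisjoint_linExts _)
      ((PBT.finite_setOf_size_le n).subset fun _ => le_of_eq) fun T _ => finite_linExts T,
    biUnion_linExts_size_eq,
    finsum_mem_eq_of_bijOn (g := fun w => (X : ℕ[X]) ^ invCount w) LPBT.inorder
      (LPBT.bijOn_inorder List.nodup_range') fun _ _ => rfl,
    finsum_mem_setOf_perm_range'_X_pow_invCount]
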